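/- For n ≥ 1, let G_n be the cubic graph obtained from a circuit of length 2n by replacing every second edge by two parallel edges. Then the integer flow spectrum satisfies: S̄(G_1) = {3}; S̄(G_2) = {3,4}; and S̄(G_n) = {3,4,6} for every n ≥ 3. -/

import Mathlib

open Finset

/-- A finite loopless multigraph with vertex type `V` and edge type `E`;
`ends e` is the unordered pair of the two distinct endpoints of the edge `e`. -/
structure Multigraph (V E : Type) where
  ends : E → Sym2 V
  not_loop : ∀ e, ¬ (ends e).IsDiag

namespace Multigraph

variable {V E : Type} [Fintype V] [Fintype E] [DecidableEq V] [DecidableEq E]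

/-- The edge `e` is incident with the vertex `v`. -/
def Inc (G : Multigraph V E) (v : V) (e : E) : Prop := v ∈ G.ends e

instance (G : Multigraph V E) (v : V) (e : E) : Decidable (G.Inc v e) :=
  inferInstanceAs (Decidable (v ∈ G.ends e))

/-- The set of edges incident with `v`. -/
def incEdges (G : Multigraph V E) (v : V) : Finset E :=
  Finset.univ.filter fun e => G.Inc v e

/-- The degree of a vertex. -/
def degree (G : Multigraph V E) (v : V) : ℕ := (G.incEdges v).card

/-- `G` is `k`-regular. -/
def IsRegular (G : Multigraph V E) (k : ℕ) : Prop := ∀ v, G.degree v = k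

/-- The set `N_σ` of negative edges of a signature `σ : E → ℤˣ`. -/
def negEdges (G : Multigraph V E) (σ : E → ℤˣ) : Finset E :=
  Finset.univ.filter fun e => σ e = -1

/-- `τ` assigns a sign to every half-edge (i.e. to each edge at each of its endpoints);
it is an orientation of the signed graph `(G, σ)` if for every edge `e = uv` the two
half-edge signs multiply to `-σ e`. -/
def IsOrientation (G : Multigraph V E) (σ : E → ℤˣ) (τ : E → V → ℤˣ) : Prop :=
  ∀ e u v, G.ends e = s(u, v) → τ e u * τ e v = - σ e

/-- The boundary `δf(v) = ∑_{h at v} τ(h) f(e_h)` of `f` at `v`. -/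
def boundary {R : Type} [CommRing R] (G : Multigraph V E) (τ : E → V → ℤˣ)
    (f : E → R) (v : V) : R :=
  ∑ e ∈ G.incEdges v, (((τ e v : ℤˣ) : ℤ) : R) * f e

/-- `f` is a nowhere-zero `r`-flow on the signed graph `(G, σ)`:
for some orientation all boundaries vanish and `1 ≤ |f e| ≤ r - 1` for every edge. -/
def IsNZFlow (G : Multigraph V E) (σ : E → ℤˣ) (r : ℝ) (f : E → ℝ) : Prop :=
  ∃ τ, G.IsOrientation σ τ ∧ (∀ v, G.boundary τ f v = 0) ∧
    ∀ e, 1 ≤ |f e| ∧ |f e| ≤ r - 1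

/-- `(G, σ)` admits a nowhere-zero `r`-flow. -/
def HasNZFlow (G : Multigraph V E) (σ : E → ℤˣ) (r : ℝ) : Prop :=
  ∃ f, G.IsNZFlow σ r f

/-- `f` is a modular nowhere-zero `r`-flow on `(G, σ)`: for some orientation all
boundaries are `≡ 0 (mod r)` and `1 ≤ |f e| ≤ r - 1` for every edge. -/
def IsModularNZFlow (G : Multigraph V E) (σ : E → ℤˣ) (r : ℝ) (f : E → ℝ) : Prop :=
  ∃ τ, G.IsOrientation σ τ ∧ (∀ v, ∃ k : ℤ, G.boundary τ f v = k * r) ∧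
    ∀ e, 1 ≤ |f e| ∧ |f e| ≤ r - 1

/-- `f` is an integer-valued nowhere-zero `n`-flow on `(G, σ)`. -/
def IsIntNZFlow (G : Multigraph V E) (σ : E → ℤˣ) (n : ℕ) (f : E → ℤ) : Prop :=
  ∃ τ, G.IsOrientation σ τ ∧ (∀ v, G.boundary τ f v = 0) ∧
    ∀ e, 1 ≤ |f e| ∧ |f e| ≤ (n : ℤ) - 1

/-- `(G, σ)` admits an integer nowhere-zero `n`-flow. -/
def HasIntNZFlow (G : Multigraph V E) (σ : E → ℤˣ) (n : ℕ) : Prop :=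
  ∃ f, G.IsIntNZFlow σ n f

/-- `(G, σ)` is flow-admissible: it has a nowhere-zero `r`-flow for some `r ≥ 2`. -/
def FlowAdmissible (G : Multigraph V E) (σ : E → ℤˣ) : Prop :=
  ∃ r : ℝ, 2 ≤ r ∧ G.HasNZFlow σ r

/-- The circular flow number `F_c(G, σ)` (the least `r` admitting a nowhere-zero `r`-flow). -/
noncomputable def Fc (G : Multigraph V E) (σ : E → ℤˣ) : ℝ :=
  sInf {r : ℝ | 2 ≤ r ∧ G.HasNZFlow σ r}

/-- The integer flow number `F(G, σ)` (the least `n` admitting an integer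
nowhere-zero `n`-flow). -/
noncomputable def Fi (G : Multigraph V E) (σ : E → ℤˣ) : ℕ :=
  sInf {n : ℕ | G.HasIntNZFlow σ n}

/-- The flow spectrum `S(G)` of `G`. -/
def Spectrum (G : Multigraph V E) : Set ℝ :=
  {r | ∃ σ : E → ℤˣ, G.FlowAdmissible σ ∧ G.Fc σ = r}

/-- The integer flow spectrum `S̄(G)` of `G`. -/
def IntSpectrum (G : Multigraph V E) : Set ℕ :=
  {n | ∃ σ : E → ℤˣ, G.FlowAdmissible σ ∧ G.Fi σ = n}

/-- `F` is the edge set of a spanning `t`-regular subgraph (a `t`-factor) of `G`. -/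
def IsFactor (G : Multigraph V E) (t : ℕ) (F : Finset E) : Prop :=
  ∀ v, (G.incEdges v ∩ F).card = t

/-- `G` has a `t`-factor. -/
def HasFactor (G : Multigraph V E) (t : ℕ) : Prop := ∃ F, G.IsFactor t F

/-- `G - X` is bipartite. -/
def BipartiteOff (G : Multigraph V E) (X : Finset E) : Prop :=
  ∃ c : V → Bool, ∀ e ∉ X, ∀ u v, G.ends e = s(u, v) → c u ≠ c v

/-- `G` is bipartite. -/
def Bipartite (G : Multigraph V E) : Prop := G.BipartiteOff ∅

/-- `X` is an `r`-minimal set: some signature `σ` with `N_σ = X` has circular flow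
number `r`, while no signature whose negative edge set is a proper subset of `X`
has circular flow number `r`. -/
def IsRMinimal (G : Multigraph V E) (r : ℝ) (X : Finset E) : Prop :=
  (∃ σ, G.negEdges σ = X ∧ G.FlowAdmissible σ ∧ G.Fc σ = r) ∧
  ∀ σ, G.negEdges σ ⊂ X → ¬ (G.FlowAdmissible σ ∧ G.Fc σ = r)

/-- `X` is an `r`-minimal set of minimum cardinality. -/
def IsSmallestRMinimal (G : Multigraph V E) (r : ℝ) (X : Finset E) : Prop :=
  G.IsRMinimal r X ∧ ∀ Y, G.IsRMinimal r Y → X.card ≤ Y.card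

end Multigraph

open Multigraph

instance (m : ℕ) : NeZero (2 * m + 2) := ⟨by omega⟩

/-- The graph `G_{m+1}` of the family: a cubic graph obtained from a circuit of
length `2(m+1)` in which every second edge is replaced by two parallel edges.
Its vertices are `v_0, …, v_{2(m+1)-1}` (elements of `ZMod (2m+2)`); for each
`i ∈ {0, …, m}` the vertices `v_{2i}` and `v_{2i+1}` are joined by the two parallel
edges `Sum.inl (i, 0)` and `Sum.inl (i, 1)`, and `v_{2i+1}` and `v_{2i+2}` (indices
mod `2(m+1)`) are joined by the single edge `Sum.inr i`. -/
def Gfam (m : ℕ) : Multigraph (ZMod (2 * m + 2)) ((Fin (m + 1) × Fin 2) ⊕ Fin (m + 1)) where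
  ends := fun e =>
    match e with
    | Sum.inl (i, _) =>
        s(((2 * i.val : ℕ) : ZMod (2 * m + 2)), ((2 * i.val + 1 : ℕ) : ZMod (2 * m + 2)))
    | Sum.inr i =>
        s(((2 * i.val + 1 : ℕ) : ZMod (2 * m + 2)), ((2 * i.val + 2 : ℕ) : ZMod (2 * m + 2)))
  not_loop := by
    rintro (⟨i, j⟩ | i) h <;> rw [Sym2.mk_isDiag_iff] at h <;>
      have hv := congrArg ZMod.val h <;>
      rw [ZMod.val_natCast, ZMod.val_natCast] at hv <;>
      have hi := i.isLt
    · rw [Nat.mod_eq_of_lt (by omega), Nat.mod_eq_of_lt (by omega)] at hv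
      omega
    · rcases Nat.lt_or_ge (2 * i.val + 2) (2 * m + 2) with hlt | hge
      · rw [Nat.mod_eq_of_lt (by omega), Nat.mod_eq_of_lt hlt] at hv
        omega
      · have h2 : 2 * i.val + 2 = 2 * m + 2 := by omega
        rw [Nat.mod_eq_of_lt (by omega), h2, Nat.mod_self] at hv
        omega

/-!
Orient each edge `v_j v_{j+1}` away from `v_j` and write `γ i` for the flow value on
the edge `v_{2i+1} v_{2i+2}`. Conservation at `v_{2i}` and `v_{2i+1}` shows that across a balanced
digon `γ i = ±γ (i-1)`, while across an unbalanced digon carrying `a` and `b` the values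
`|γ (i-1)| = |a + b|` and `|γ i| = |a - b|` are distinct and of equal parity. Conversely any such
sequence `γ` extends to a flow. So with `k` unbalanced digons: `k = 1` admits no flow at all;
`k = 0` gives flow number `3` (or no flow, if the signs around the cycle multiply to `-1`); and for
`k ≥ 2` the values `|γ i|` form, up to repetition, a proper colouring of a `k`-cycle by odd numbers,
which needs the colours `1, 3` when `k` is even (flow number `4`) and `1, 3, 5` when `k` is odd
(flow number `6`). Values `±1` alone are impossible since the degrees are odd.
-/

lemma ne_zero_of_one_le_abs {R : Type} [CommRing R] [LinearOrder R] [IsStrictOrderedRing R]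
    {x : R} (h : 1 ≤ |x|) : x ≠ 0 :=
  abs_pos.mp (zero_lt_one.trans_le h)

namespace Multigraph

variable {V E : Type} [DecidableEq V] {G : Multigraph V E} {σ : E → ℤˣ}

lemma IsOrientation.mul_eq_mul {τ τ' : E → V → ℤˣ} (hτ : G.IsOrientation σ τ)
    (hτ' : G.IsOrientation σ τ') {e : E} {u v : V} (hu : u ∈ G.ends e) (hv : v ∈ G.ends e) :
    τ' e u * τ e u = τ' e v * τ e v := by
  have hw := Sym2.other_spec hu
  rw [← hw, Sym2.mem_iff] at hv
  rcases hv with rfl | rfl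
  · rfl
  have h := hτ e u _ hw.symm
  have h' := hτ' e u _ hw.symm
  rcases Int.units_eq_one_or (τ e u) with h1 | h1 <;>
    rcases Int.units_eq_one_or (τ' e u) with h2 | h2 <;>
    rcases Int.units_eq_one_or (τ e (Sym2.Mem.other hu)) with h3 | h3 <;>
    rcases Int.units_eq_one_or (τ' e (Sym2.Mem.other hu)) with h4 | h4 <;>
    simp_all

def orientOfTail (σ : E → ℤˣ) (t : E → V) : E → V → ℤˣ :=
  fun e v => if v = t e then 1 else -σ e

lemma isOrientation_orientOfTail {t : E → V} (ht : ∀ e, t e ∈ G.ends e) :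
    G.IsOrientation σ (orientOfTail σ t) := by
  intro e u v h
  have huv : u ≠ v := by
    rintro rfl
    exact G.not_loop e (h ▸ Sym2.mk_isDiag_iff.mpr rfl)
  have hte := ht e
  rw [h, Sym2.mem_iff] at hte
  rcases hte with rfl | rfl <;> simp [orientOfTail, huv, huv.symm]

variable [Fintype E]

lemma mem_incEdges {v : V} {e : E} : e ∈ G.incEdges v ↔ v ∈ G.ends e := by
  rw [incEdges, mem_filter]
  exact and_iff_right (mem_univ e)

lemma HasIntNZFlow.mono {a b : ℕ} (hab : a ≤ b) (h : G.HasIntNZFlow σ a) :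
    G.HasIntNZFlow σ b := by
  obtain ⟨f, τ, hτ, hf, hbd⟩ := h
  have hab' : (a : ℤ) ≤ b := by exact_mod_cast hab
  exact ⟨f, τ, hτ, hf, fun e => ⟨(hbd e).1, (hbd e).2.trans (by omega)⟩⟩

lemma Fi_eq_succ {n : ℕ} (h : G.HasIntNZFlow σ (n + 1)) (h' : ¬ G.HasIntNZFlow σ n) :
    G.Fi σ = n + 1 :=
  le_antisymm (Nat.sInf_le h) <| le_csInf ⟨_, h⟩ fun b hb => by
    by_contra! hlt
    exact h' (hb.mono (by omega))

lemma HasIntNZFlow.flowAdmissible {n : ℕ} (hn : 2 ≤ n) (h : G.HasIntNZFlow σ n) :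
    G.FlowAdmissible σ := by
  obtain ⟨f, τ, hτ, hf, hbd⟩ := h
  refine ⟨n, by exact_mod_cast hn, fun e => f e, τ, hτ, fun v => ?_, fun e => ?_⟩
  · simpa [boundary] using congrArg (Int.cast : ℤ → ℝ) (hf v)
  · rw [← Int.cast_abs]
    exact ⟨by exact_mod_cast (hbd e).1, by exact_mod_cast (hbd e).2⟩

lemma exists_flow_of_isOrientation {R : Type} [CommRing R] [LinearOrder R]
    [IsStrictOrderedRing R] {τ τ' : E → V → ℤˣ} (hτ : G.IsOrientation σ τ)
    (hτ' : G.IsOrientation σ τ') {f : E → R} (hf : ∀ v, G.boundary τ f v = 0) :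
    ∃ g : E → R, (∀ v, G.boundary τ' g v = 0) ∧ ∀ e, |g e| = |f e| := by
  set c : E → ℤˣ := fun e => τ' e (G.ends e).out.1 * τ e (G.ends e).out.1
  refine ⟨fun e => ((c e : ℤ) : R) * f e, fun v => ?_, fun e => ?_⟩
  · rw [← hf v, boundary, boundary]
    refine sum_congr rfl fun e he => ?_
    have hc : τ' e v * c e = τ e v := by
      rw [show c e = τ' e v * τ e v from
        hτ.mul_eq_mul hτ' (Sym2.out_fst_mem _) (mem_incEdges.mp he), ← mul_assoc,
        Int.units_mul_self, one_mul]
    rw [← mul_assoc, ← Int.cast_mul, ← Units.val_mul, hc]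
  · rcases Int.units_eq_one_or (c e) with h | h <;> simp [h]

lemma hasIntNZFlow_iff {τ : E → V → ℤˣ} (hτ : G.IsOrientation σ τ) {n : ℕ} :
    G.HasIntNZFlow σ n ↔
      ∃ f : E → ℤ, (∀ v, G.boundary τ f v = 0) ∧ ∀ e, 1 ≤ |f e| ∧ |f e| ≤ n - 1 := by
  constructor
  · rintro ⟨f, τ₀, hτ₀, hf, hbd⟩
    obtain ⟨g, hg, habs⟩ := exists_flow_of_isOrientation hτ₀ hτ hf
    exact ⟨g, hg, fun e => habs e ▸ hbd e⟩
  · rintro ⟨f, hf, hbd⟩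
    exact ⟨f, τ, hτ, hf, hbd⟩

lemma FlowAdmissible.exists_flow {τ : E → V → ℤˣ} (hτ : G.IsOrientation σ τ)
    (h : G.FlowAdmissible σ) : ∃ f : E → ℝ, (∀ v, G.boundary τ f v = 0) ∧ ∀ e, 1 ≤ |f e| := by
  obtain ⟨_, _, f, τ₀, hτ₀, hf, hbd⟩ := h
  obtain ⟨g, hg, habs⟩ := exists_flow_of_isOrientation hτ₀ hτ hf
  exact ⟨g, hg, fun e => habs e ▸ (hbd e).1⟩

end Multigraph

namespace Fin

variable {n : ℕ}

@[to_additive sum_comp_sub_one]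
lemma prod_comp_sub_one {M : Type} [CommMonoid M] (f : Fin (n + 1) → M) :
    ∏ i, f (i - 1) = ∏ i, f i :=
  (Equiv.subRight 1).prod_comp f

lemma Iic_eq_insert_sub_one {i : Fin (n + 1)} (hi : i ≠ 0) : Iic i = insert i (Iic (i - 1)) := by
  have h1 : ((i - 1 : Fin (n + 1)) : ℕ) = i - 1 := by rw [Fin.coe_sub_one, if_neg hi]
  have h2 : (i : ℕ) ≠ 0 := fun h => hi (Fin.ext h)
  ext j
  simp only [mem_Iic, mem_insert, Fin.le_iff_val_le_val, Fin.ext_iff, h1]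
  omega

@[to_additive exists_eq_add_comp_sub_one]
lemma exists_eq_mul_comp_sub_one {G : Type} [CommGroup G] (d : Fin (n + 1) → G)
    (hd : ∏ i, d i = 1) : ∃ s : Fin (n + 1) → G, ∀ i, s i = d i * s (i - 1) := by
  refine ⟨fun i => ∏ j ∈ Iic i, d j, fun i => ?_⟩
  dsimp only
  by_cases hi : i = 0
  · subst hi
    have hlast : (0 : Fin (n + 1)) - 1 = ⊤ := by ext; simp
    rw [hlast, Iic_top, hd, mul_one, ← bot_eq_zero, Iic_bot, prod_singleton]
  · rw [Iic_eq_insert_sub_one hi, prod_insert]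
    simp [hi]

lemma exists_eq_mul_comp_sub_one_of_ne {G : Type} [CommGroup G] (d : Fin (n + 1) → G)
    (i₀ : Fin (n + 1)) : ∃ s : Fin (n + 1) → G, ∀ i ≠ i₀, s i = d i * s (i - 1) := by
  obtain ⟨s, hs⟩ := exists_eq_mul_comp_sub_one
    (Function.update d i₀ (∏ j ∈ univ \ {i₀}, d j)⁻¹)
    (by rw [prod_update_of_mem (mem_univ i₀), inv_mul_cancel])
  exact ⟨s, fun i hi => by rw [hs, Function.update_of_ne hi]⟩

end Fin

lemma Int.abs_units_mul (u : ℤˣ) (z : ℤ) : |(u : ℤ) * z| = |z| := by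
  rw [abs_mul, Int.isUnit_iff_abs_eq.mp u.isUnit, one_mul]

lemma Int.odd_units_mul (u : ℤˣ) {z : ℤ} (hz : Odd z) : Odd ((u : ℤ) * z) := by
  rcases Int.units_eq_one_or u with rfl | rfl
  · simpa using hz
  · simpa using hz

lemma Int.exists_add_eq_of_abs_le {t N : ℤ} (hN : 2 ≤ N) (ht : 1 ≤ |t|) (htN : |t| ≤ N) :
    ∃ a b : ℤ, a + b = t ∧ (1 ≤ |a| ∧ |a| ≤ N) ∧ (1 ≤ |b| ∧ |b| ≤ N) := by
  simp only [abs_le, le_abs'] at ht htN ⊢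
  rcases (by omega : t = 1 ∨ t = -1 ∨ 2 ≤ t ∨ t ≤ -2) with rfl | rfl | h | h
  · exact ⟨2, -1, by norm_num, by omega, by omega⟩
  · exact ⟨-2, 1, by norm_num, by omega, by omega⟩
  · exact ⟨t - 1, 1, by ring, by omega, by omega⟩
  · exact ⟨t + 1, -1, by ring, by omega, by omega⟩

lemma Int.exists_add_eq_sub_eq_of_odd {x y N : ℤ} (hx : Odd x) (hy : Odd y) (hxy : |x| ≠ |y|)
    (hxN : |x| ≤ N) (hyN : |y| ≤ N) :
    ∃ a b : ℤ, a + b = x ∧ a - b = y ∧ (1 ≤ |a| ∧ |a| ≤ N) ∧ (1 ≤ |b| ∧ |b| ≤ N) := by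
  obtain ⟨p, rfl⟩ := hx
  obtain ⟨q, rfl⟩ := hy
  rw [Ne, abs_eq_abs] at hxy
  simp only [abs_le, le_abs'] at hxN hyN ⊢
  exact ⟨p + q + 1, p - q, by ring, by ring, by omega, by omega⟩

def oddColouring (k : ℕ) (t : ZMod k) : ℤ :=
  if Odd k ∧ t.val + 1 = k then 5 else if Odd t.val then 3 else 1

section oddColouring

variable {k : ℕ}

lemma odd_oddColouring (t : ZMod k) : Odd (oddColouring k t) := by
  unfold oddColouring
  split_ifs <;> decide

variable [NeZero k]

lemma oddColouring_mem_Icc (t : ZMod k) :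
    1 ≤ oddColouring k t ∧ oddColouring k t ≤ if Even k then 3 else 5 := by
  have := ZMod.val_lt t
  simp only [oddColouring, ← Nat.not_even_iff_odd, Nat.even_iff]
  split_ifs <;> omega

lemma oddColouring_add_one_ne (hk : 2 ≤ k) (t : ZMod k) :
    oddColouring k (t + 1) ≠ oddColouring k t := by
  have ht := ZMod.val_lt t
  have h1 : (t + 1).val = if t.val + 1 = k then 0 else t.val + 1 := by
    rw [ZMod.val_add, ZMod.val_one_eq_one_mod, Nat.mod_eq_of_lt (a := 1) (by omega)]
    split_ifs with h
    · rw [h, Nat.mod_self]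
    · exact Nat.mod_eq_of_lt (by omega)
  simp only [oddColouring, h1, ← Nat.not_even_iff_odd, Nat.even_iff]
  split_ifs <;> omega

end oddColouring

namespace Gfam

variable {m : ℕ}

abbrev Edge (m : ℕ) := (Fin (m + 1) × Fin 2) ⊕ Fin (m + 1)

variable {σ : Edge m → ℤˣ}

def vEven (i : Fin (m + 1)) : ZMod (2 * m + 2) := ((2 * i.val : ℕ) : ZMod (2 * m + 2))

def vOdd (i : Fin (m + 1)) : ZMod (2 * m + 2) := ((2 * i.val + 1 : ℕ) : ZMod (2 * m + 2))

lemma natCast_inj {a b : ℕ} (ha : a < 2 * m + 2) (hb : b < 2 * m + 2) :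
    (a : ZMod (2 * m + 2)) = b ↔ a = b := by
  rw [ZMod.natCast_eq_natCast_iff', Nat.mod_eq_of_lt ha, Nat.mod_eq_of_lt hb]

@[simp] lemma vEven_inj {i j : Fin (m + 1)} : vEven i = vEven j ↔ i = j := by
  rw [vEven, vEven, natCast_inj (by omega) (by omega), Fin.ext_iff]
  omega

@[simp] lemma vOdd_inj {i j : Fin (m + 1)} : vOdd i = vOdd j ↔ i = j := by
  rw [vOdd, vOdd, natCast_inj (by omega) (by omega), Fin.ext_iff]
  omega

@[simp] lemma vEven_ne_vOdd (i j : Fin (m + 1)) : vEven i ≠ vOdd j := by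
  rw [vEven, vOdd, Ne, natCast_inj (by omega) (by omega)]
  omega

@[simp] lemma vOdd_ne_vEven (i j : Fin (m + 1)) : vOdd i ≠ vEven j :=
  (vEven_ne_vOdd j i).symm

lemma exists_eq_vEven_or_vOdd (v : ZMod (2 * m + 2)) : ∃ i, v = vEven i ∨ v = vOdd i := by
  obtain ⟨k, hk, rfl⟩ : ∃ k < 2 * m + 2, v = (k : ZMod (2 * m + 2)) :=
    ⟨v.val, ZMod.val_lt v, (ZMod.natCast_zmod_val v).symm⟩
  refine ⟨⟨k / 2, by omega⟩, ?_⟩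
  rw [vEven, vOdd, natCast_inj hk (by omega), natCast_inj hk (by omega)]
  show k = 2 * (k / 2) ∨ k = 2 * (k / 2) + 1
  omega

lemma natCast_two_mul_add_two (i : Fin (m + 1)) :
    ((2 * i.val + 2 : ℕ) : ZMod (2 * m + 2)) = vEven (i + 1) := by
  rw [vEven, ZMod.natCast_eq_natCast_iff', Fin.val_add_one]
  split_ifs with h
  · rw [Fin.ext_iff] at h
    simp [h]
  · rfl

lemma ends_inl (i : Fin (m + 1)) (j : Fin 2) :
    (Gfam m).ends (.inl (i, j)) = s(vEven i, vOdd i) := rfl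

lemma ends_inr (i : Fin (m + 1)) : (Gfam m).ends (.inr i) = s(vOdd i, vEven (i + 1)) := by
  rw [← natCast_two_mul_add_two]
  rfl

lemma incEdges_vEven (i : Fin (m + 1)) :
    (Gfam m).incEdges (vEven i) = {.inl (i, 0), .inl (i, 1), .inr (i - 1)} := by
  ext (⟨q, j⟩ | q) <;> simp [mem_incEdges, ends_inl, ends_inr, eq_comm (a := i), eq_sub_iff_add_eq]
  fin_cases j <;> simp

lemma incEdges_vOdd (i : Fin (m + 1)) :
    (Gfam m).incEdges (vOdd i) = {.inl (i, 0), .inl (i, 1), .inr i} := by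
  ext (⟨q, j⟩ | q) <;> simp [mem_incEdges, ends_inl, ends_inr, eq_comm (a := i)]
  fin_cases j <;> simp

def tail : Edge m → ZMod (2 * m + 2)
  | .inl (i, _) => vEven i
  | .inr i => vOdd i

abbrev stdOrient (σ : Edge m → ℤˣ) : Edge m → ZMod (2 * m + 2) → ℤˣ := orientOfTail σ tail

lemma isOrientation_stdOrient (σ : Edge m → ℤˣ) : (Gfam m).IsOrientation σ (stdOrient σ) :=
  isOrientation_orientOfTail fun
    | .inl (i, j) => by simp [tail, ends_inl]
    | .inr i => by simp [tail, ends_inr]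

section BlockFlow

variable {R : Type} [CommRing R] {g : Edge m → R}

lemma boundary_vEven (i : Fin (m + 1)) :
    (Gfam m).boundary (stdOrient σ) g (vEven i) =
      g (.inl (i, 0)) + g (.inl (i, 1)) - (σ (.inr (i - 1)) : ℤ) * g (.inr (i - 1)) := by
  rw [boundary, incEdges_vEven, sum_insert (by simp), sum_insert (by simp), sum_singleton]
  simp [orientOfTail, tail]
  ring

lemma boundary_vOdd (i : Fin (m + 1)) :
    (Gfam m).boundary (stdOrient σ) g (vOdd i) = g (.inr i) -
      ((σ (.inl (i, 0)) : ℤ) * g (.inl (i, 0)) + (σ (.inl (i, 1)) : ℤ) * g (.inl (i, 1))) := by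
  rw [boundary, incEdges_vOdd, sum_insert (by simp), sum_insert (by simp), sum_singleton]
  simp [orientOfTail, tail]
  ring

def IsBlockFlow (σ : Edge m → ℤˣ) (g : Edge m → R) : Prop :=
  ∀ i, g (.inl (i, 0)) + g (.inl (i, 1)) = (σ (.inr (i - 1)) : ℤ) * g (.inr (i - 1)) ∧
    (σ (.inl (i, 0)) : ℤ) * g (.inl (i, 0)) + (σ (.inl (i, 1)) : ℤ) * g (.inl (i, 1)) =
      g (.inr i)

lemma boundary_stdOrient_eq_zero_iff :
    (∀ v, (Gfam m).boundary (stdOrient σ) g v = 0) ↔ IsBlockFlow σ g := by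
  refine ⟨fun h i => ⟨?_, ?_⟩, fun h v => ?_⟩
  · linear_combination h (vEven i) - boundary_vEven (σ := σ) (g := g) i
  · linear_combination boundary_vOdd (σ := σ) (g := g) i - h (vOdd i)
  · obtain ⟨i, rfl | rfl⟩ := exists_eq_vEven_or_vOdd v
    · rw [boundary_vEven, (h i).1, sub_self]
    · rw [boundary_vOdd, (h i).2, sub_self]

end BlockFlow

lemma hasIntNZFlow_iff {n : ℕ} :
    (Gfam m).HasIntNZFlow σ n ↔
      ∃ g : Edge m → ℤ, IsBlockFlow σ g ∧ ∀ e, 1 ≤ |g e| ∧ |g e| ≤ n - 1 := by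
  simp only [Multigraph.hasIntNZFlow_iff (isOrientation_stdOrient σ),
    boundary_stdOrient_eq_zero_iff]

lemma exists_isBlockFlow_of_flowAdmissible (h : (Gfam m).FlowAdmissible σ) :
    ∃ g : Edge m → ℝ, IsBlockFlow σ g ∧ ∀ e, 1 ≤ |g e| := by
  simpa only [boundary_stdOrient_eq_zero_iff] using h.exists_flow (isOrientation_stdOrient σ)

def digonSign (σ : Edge m → ℤˣ) (i : Fin (m + 1)) : ℤˣ := σ (.inl (i, 0)) * σ (.inl (i, 1))

def transferSign (σ : Edge m → ℤˣ) (i : Fin (m + 1)) : ℤˣ := σ (.inl (i, 0)) * σ (.inr (i - 1))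

def unbalanced (σ : Edge m → ℤˣ) : Finset (Fin (m + 1)) := univ.filter fun i => digonSign σ i = -1

lemma sign_inl_one (σ : Edge m → ℤˣ) (i : Fin (m + 1)) :
    σ (.inl (i, 1)) = digonSign σ i * σ (.inl (i, 0)) := by
  rw [digonSign, mul_comm (σ _), mul_assoc, Int.units_mul_self, mul_one]

lemma mem_unbalanced {i : Fin (m + 1)} : i ∈ unbalanced σ ↔ digonSign σ i = -1 := by
  simp [unbalanced]

lemma digonSign_eq_one {i : Fin (m + 1)} (hi : i ∉ unbalanced σ) : digonSign σ i = 1 :=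
  (Int.units_eq_one_or _).resolve_right (mt mem_unbalanced.mpr hi)

lemma prod_digonSign (σ : Edge m → ℤˣ) : ∏ i, digonSign σ i = (-1) ^ (unbalanced σ).card := by
  rw [← prod_filter_mul_prod_filter_not univ (fun i => digonSign σ i = -1), ← unbalanced,
    prod_eq_pow_card fun i hi => mem_unbalanced.mp hi,
    prod_eq_one fun i hi => (Int.units_eq_one_or _).resolve_right (mem_filter.mp hi).2, mul_one]

section Ordered

variable {R : Type} [CommRing R] [LinearOrder R] [IsStrictOrderedRing R] {g : Edge m → R}

lemma IsBlockFlow.inr_eq_of_balanced (hg : IsBlockFlow σ g) {i : Fin (m + 1)}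
    (hi : digonSign σ i = 1) : g (.inr i) = (transferSign σ i : ℤ) * g (.inr (i - 1)) := by
  obtain ⟨h1, h2⟩ := hg i
  rw [sign_inl_one σ i, hi, one_mul] at h2
  rw [transferSign, Units.val_mul, Int.cast_mul]
  linear_combination ((σ (.inl (i, 0)) : ℤ) : R) * h1 - h2

lemma IsBlockFlow.abs_inr_of_balanced (hg : IsBlockFlow σ g) {i : Fin (m + 1)}
    (hi : digonSign σ i = 1) : |g (.inr i)| = |g (.inr (i - 1))| := by
  rw [hg.inr_eq_of_balanced hi, abs_mul, abs_unit_intCast, one_mul]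

lemma IsBlockFlow.abs_inr_of_unbalanced (hg : IsBlockFlow σ g) {i : Fin (m + 1)}
    (hi : digonSign σ i = -1) :
    |g (.inr (i - 1))| = |g (.inl (i, 0)) + g (.inl (i, 1))| ∧
      |g (.inr i)| = |g (.inl (i, 0)) - g (.inl (i, 1))| := by
  obtain ⟨h1, h2⟩ := hg i
  rw [sign_inl_one σ i, hi] at h2
  refine ⟨by rw [h1, abs_mul, abs_unit_intCast, one_mul], ?_⟩
  have h2' : g (.inr i) = ((σ (.inl (i, 0)) : ℤ) : R) * (g (.inl (i, 0)) - g (.inl (i, 1))) := by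
    rw [← h2]
    push_cast
    ring
  rw [h2', abs_mul, abs_unit_intCast, one_mul]

lemma IsBlockFlow.abs_inr_ne_of_unbalanced (hg : IsBlockFlow σ g) {i : Fin (m + 1)}
    (hi : digonSign σ i = -1) (h0 : g (.inl (i, 0)) ≠ 0) (h1 : g (.inl (i, 1)) ≠ 0) :
    |g (.inr i)| ≠ |g (.inr (i - 1))| := by
  obtain ⟨hprev, hnext⟩ := hg.abs_inr_of_unbalanced hi
  rw [hprev, hnext, Ne, abs_eq_abs]
  rintro (h | h)
  · exact h1 ((mul_eq_zero.mp (by linear_combination -h : 2 * g (.inl (i, 1)) = 0)).resolve_left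
      two_ne_zero)
  · exact h0 ((mul_eq_zero.mp (by linear_combination h : 2 * g (.inl (i, 0)) = 0)).resolve_left
      two_ne_zero)

end Ordered

lemma IsBlockFlow.abs_inr_emod_two_of_unbalanced {g : Edge m → ℤ} (hg : IsBlockFlow σ g)
    {i : Fin (m + 1)} (hi : digonSign σ i = -1) :
    |g (.inr i)| % 2 = |g (.inr (i - 1))| % 2 := by
  obtain ⟨hprev, hnext⟩ := hg.abs_inr_of_unbalanced hi
  rw [hprev, hnext]
  rcases abs_choice (g (.inl (i, 0)) + g (.inl (i, 1))) with h | h <;>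
    rcases abs_choice (g (.inl (i, 0)) - g (.inl (i, 1))) with h' | h' <;>
    rw [h, h'] <;> omega

lemma not_flowAdmissible_of_prod_transferSign (hbal : ∀ i, digonSign σ i = 1)
    (hd : ∏ i, transferSign σ i = -1) : ¬ (Gfam m).FlowAdmissible σ := by
  intro h
  obtain ⟨g, hg, hg1⟩ := exists_isBlockFlow_of_flowAdmissible h
  have hne : ∏ i, g (.inr i) ≠ 0 := prod_ne_zero_iff.mpr fun i _ => ne_zero_of_one_le_abs (hg1 _)
  have key : ∏ i, g (.inr i) = -∏ i, g (.inr i) := calc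
    ∏ i, g (.inr i) = ∏ i, ((transferSign σ i : ℤ) : ℝ) * g (.inr (i - 1)) :=
      prod_congr rfl fun i _ => hg.inr_eq_of_balanced (hbal i)
    _ = ((∏ i, transferSign σ i : ℤˣ) : ℤ) * ∏ i, g (.inr (i - 1)) := by
      rw [prod_mul_distrib]
      push_cast
      rfl
    _ = -∏ i, g (.inr i) := by
      rw [hd, Fin.prod_comp_sub_one fun i => g (.inr i)]
      simp
  exact hne (by linarith)

/-- Around the cycle the values `|f(v_{2i+1} v_{2i+2})|` change only at unbalanced digons, and
they must change there. -/
lemma not_flowAdmissible_of_card_unbalanced_eq_one (h1 : (unbalanced σ).card = 1) :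
    ¬ (Gfam m).FlowAdmissible σ := by
  intro h
  obtain ⟨i₀, hi₀⟩ := card_eq_one.mp h1
  obtain ⟨g, hg, hg1⟩ := exists_isBlockFlow_of_flowAdmissible h
  have hsum : ∑ i, (|g (.inr i)| - |g (.inr (i - 1))|) = 0 := by
    rw [sum_sub_distrib, Fin.sum_comp_sub_one fun i => |g (.inr i)|, sub_self]
  rw [sum_eq_single i₀ (fun i _ hi => by
      rw [hg.abs_inr_of_balanced (digonSign_eq_one (by simp [hi₀, hi])), sub_self])
    (by simp)] at hsum
  exact hg.abs_inr_ne_of_unbalanced (mem_unbalanced.mp (by simp [hi₀]))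
    (ne_zero_of_one_le_abs (hg1 _)) (ne_zero_of_one_le_abs (hg1 _)) (sub_eq_zero.mp hsum)

lemma not_hasIntNZFlow_two (σ : Edge m → ℤˣ) : ¬ (Gfam m).HasIntNZFlow σ 2 := by
  rw [hasIntNZFlow_iff]
  rintro ⟨g, hg, hbd⟩
  have h := (hg 0).1
  have h₁ := hbd (.inl (0, 0))
  have h₂ := hbd (.inl (0, 1))
  have h₃ := hbd (.inr (0 - 1))
  simp only [abs_le, le_abs'] at h₁ h₂ h₃
  rcases Int.units_eq_one_or (σ (.inr (0 - 1))) with hs | hs <;> rw [hs] at h <;>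
    push_cast at h h₁ h₂ h₃ <;> omega

lemma not_hasIntNZFlow_three (hU : (unbalanced σ).Nonempty) : ¬ (Gfam m).HasIntNZFlow σ 3 := by
  rw [hasIntNZFlow_iff]
  rintro ⟨g, hg, hbd⟩
  obtain ⟨i, hi⟩ := hU
  have hne := hg.abs_inr_ne_of_unbalanced (mem_unbalanced.mp hi)
    (ne_zero_of_one_le_abs (hbd _).1) (ne_zero_of_one_le_abs (hbd _).1)
  have hpar := hg.abs_inr_emod_two_of_unbalanced (mem_unbalanced.mp hi)
  have h₁ := hbd (.inr i)
  have h₂ := hbd (.inr (i - 1))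
  push_cast at h₁ h₂
  omega

lemma not_hasIntNZFlow_five (hodd : Odd (unbalanced σ).card) : ¬ (Gfam m).HasIntNZFlow σ 5 := by
  rw [hasIntNZFlow_iff]
  rintro ⟨g, hg, hbd⟩
  -- `χ` flips exactly at the unbalanced digons, of which there is an odd number.
  let χ : Fin (m + 1) → ℤˣ := fun i => if |g (.inr i)| ≤ 2 then 1 else -1
  have hχ : ∀ i, χ i * χ (i - 1) = digonSign σ i := by
    intro i
    rcases Int.units_eq_one_or (digonSign σ i) with h | h
    · simp only [χ, hg.abs_inr_of_balanced h, h]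
      split_ifs <;> decide
    · have hne := hg.abs_inr_ne_of_unbalanced h
        (ne_zero_of_one_le_abs (hbd _).1) (ne_zero_of_one_le_abs (hbd _).1)
      have hpar := hg.abs_inr_emod_two_of_unbalanced h
      have h₁ := hbd (.inr i)
      have h₂ := hbd (.inr (i - 1))
      push_cast at h₁ h₂
      simp only [χ, h]
      split_ifs <;> first | decide | omega
  have : (-1 : ℤˣ) = 1 := calc
    (-1 : ℤˣ) = ∏ i, digonSign σ i := by rw [prod_digonSign, hodd.neg_one_pow]
    _ = (∏ i, χ i) * ∏ i, χ i := by
      simp_rw [← hχ, prod_mul_distrib, Fin.prod_comp_sub_one χ]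
    _ = 1 := Int.units_mul_self _
  exact absurd this (by decide)

lemma exists_digon_flow {N : ℤ} (hN : 2 ≤ N) {i : Fin (m + 1)} {x y : ℤ}
    (hx : 1 ≤ |x| ∧ |x| ≤ N) (hy : |y| ≤ N)
    (h : (digonSign σ i = 1 ∧ y = transferSign σ i * x) ∨
      (digonSign σ i = -1 ∧ Odd x ∧ Odd y ∧ |y| ≠ |x|)) :
    ∃ a b : ℤ, a + b = σ (.inr (i - 1)) * x ∧
      σ (.inl (i, 0)) * a + σ (.inl (i, 1)) * b = y ∧
      (1 ≤ |a| ∧ |a| ≤ N) ∧ (1 ≤ |b| ∧ |b| ≤ N) := by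
  rw [sign_inl_one σ i]
  rcases h with ⟨hd, rfl⟩ | ⟨hd, hxo, hyo, hne⟩ <;> rw [hd]
  · obtain ⟨a, b, hab, ha, hb⟩ := Int.exists_add_eq_of_abs_le (t := σ (.inr (i - 1)) * x) hN
      (by rw [Int.abs_units_mul]; exact hx.1) (by rw [Int.abs_units_mul]; exact hx.2)
    refine ⟨a, b, hab, ?_, ha, hb⟩
    rw [transferSign]
    push_cast
    linear_combination (σ (.inl (i, 0)) : ℤ) * hab
  · obtain ⟨a, b, hab, hab', ha, hb⟩ := Int.exists_add_eq_sub_eq_of_odd (N := N)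
      (Int.odd_units_mul (σ (.inr (i - 1))) hxo) (Int.odd_units_mul (σ (.inl (i, 0))) hyo)
      (by rw [Int.abs_units_mul, Int.abs_units_mul]; exact hne.symm)
      (by rw [Int.abs_units_mul]; exact hx.2) (by rw [Int.abs_units_mul]; exact hy)
    refine ⟨a, b, hab, ?_, ha, hb⟩
    have hsq : (σ (.inl (i, 0)) : ℤ) * σ (.inl (i, 0)) = 1 := by
      rw [← Units.val_mul, Int.units_mul_self, Units.val_one]
    push_cast
    linear_combination (σ (.inl (i, 0)) : ℤ) * hab' + y * hsq

lemma hasIntNZFlow_of_cycle {n : ℕ} (hn : 3 ≤ n) (γ : Fin (m + 1) → ℤ)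
    (hγ : ∀ i, 1 ≤ |γ i| ∧ |γ i| ≤ n - 1)
    (hbal : ∀ i, digonSign σ i = 1 → γ i = transferSign σ i * γ (i - 1))
    (hunbal : ∀ i, digonSign σ i = -1 → Odd (γ (i - 1)) ∧ Odd (γ i) ∧ |γ i| ≠ |γ (i - 1)|) :
    (Gfam m).HasIntNZFlow σ n := by
  have hN : (2 : ℤ) ≤ n - 1 := by omega
  have hdigon := fun i => exists_digon_flow hN (hγ (i - 1)) (hγ i).2 <|
    (Int.units_eq_one_or (digonSign σ i)).imp (fun h => ⟨h, hbal i h⟩) (fun h => ⟨h, hunbal i h⟩)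
  choose a b hab using hdigon
  rw [hasIntNZFlow_iff]
  refine ⟨Sum.elim (fun p => ![a p.1, b p.1] p.2) γ, fun i => ⟨(hab i).1, (hab i).2.1⟩, ?_⟩
  rintro (⟨i, j⟩ | i)
  · fin_cases j
    exacts [(hab i).2.2.1, (hab i).2.2.2]
  · exact hγ i

lemma hasIntNZFlow_three (hbal : ∀ i, digonSign σ i = 1) (hd : ∏ i, transferSign σ i = 1) :
    (Gfam m).HasIntNZFlow σ 3 := by
  obtain ⟨s, hs⟩ := Fin.exists_eq_mul_comp_sub_one _ hd
  refine hasIntNZFlow_of_cycle le_rfl (fun i => s i) (fun i => ?_) (fun i _ => by simp [hs i])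
    (fun i h => absurd (h.symm.trans (hbal i)) (by decide))
  rw [Int.isUnit_iff_abs_eq.mp (s i).isUnit]
  norm_num

/-- Signs follow the balanced digons, while the absolute values `oddColouring k (c i)` step to the
next colour exactly at the unbalanced ones; `c i` counts the unbalanced digons modulo `k`. -/
lemma hasIntNZFlow_of_two_le_card (hk : 2 ≤ (unbalanced σ).card) :
    (Gfam m).HasIntNZFlow σ (if Even (unbalanced σ).card then 4 else 6) := by
  obtain ⟨k, hkσ⟩ : ∃ k, (unbalanced σ).card = k := ⟨_, rfl⟩
  rw [hkσ] at hk ⊢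
  have : NeZero k := ⟨by omega⟩
  obtain ⟨i₀, hi₀⟩ := card_pos.mp (by omega : 0 < (unbalanced σ).card)
  obtain ⟨s, hs⟩ := Fin.exists_eq_mul_comp_sub_one_of_ne (transferSign σ) i₀
  obtain ⟨c, hc⟩ := Fin.exists_eq_add_comp_sub_one
    (fun i => if i ∈ unbalanced σ then (1 : ZMod k) else 0)
    (by rw [sum_ite_mem, univ_inter, sum_const, hkσ, nsmul_one, ZMod.natCast_self])
  have habs : ∀ i, |(s i : ℤ) * oddColouring k (c i)| = oddColouring k (c i) := fun i => by
    rw [Int.abs_units_mul, abs_of_pos (by linarith [(oddColouring_mem_Icc (c i)).1])]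
  refine hasIntNZFlow_of_cycle (by split_ifs <;> norm_num) (fun i => s i * oddColouring k (c i))
    (fun i => ?_) (fun i hi => ?_) (fun i hi => ?_)
  · have := oddColouring_mem_Icc (c i)
    rw [habs]
    split_ifs at this ⊢ <;> push_cast <;> omega
  · have hi' : i ∉ unbalanced σ := by rw [mem_unbalanced, hi]; decide
    rw [hs i (ne_of_mem_of_not_mem hi₀ hi').symm, hc i, if_neg hi', zero_add, Units.val_mul]
    ring
  · refine ⟨Int.odd_units_mul _ (odd_oddColouring _), Int.odd_units_mul _ (odd_oddColouring _), ?_⟩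
    rw [habs, habs, hc i, if_pos (mem_unbalanced.mpr hi), add_comm]
    exact oddColouring_add_one_ne hk _

lemma Fi_eq_three (hbal : ∀ i, digonSign σ i = 1) (hd : ∏ i, transferSign σ i = 1) :
    (Gfam m).Fi σ = 3 :=
  Fi_eq_succ (hasIntNZFlow_three hbal hd) (not_hasIntNZFlow_two σ)

lemma Fi_eq_of_two_le_card (hk : 2 ≤ (unbalanced σ).card) :
    (Gfam m).Fi σ = if Even (unbalanced σ).card then 4 else 6 := by
  have h := hasIntNZFlow_of_two_le_card hk
  split_ifs at h ⊢ with he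
  · exact Fi_eq_succ h (not_hasIntNZFlow_three (card_pos.mp (by omega)))
  · exact Fi_eq_succ h (not_hasIntNZFlow_five (Nat.not_even_iff_odd.mp he))

lemma Fi_of_flowAdmissible (h : (Gfam m).FlowAdmissible σ) :
    (Gfam m).Fi σ = 3 ∨ ((Gfam m).Fi σ = 4 ∧ 2 ≤ (unbalanced σ).card) ∨
      ((Gfam m).Fi σ = 6 ∧ 3 ≤ (unbalanced σ).card) := by
  obtain h0 | h1 | h2 : (unbalanced σ).card = 0 ∨ (unbalanced σ).card = 1 ∨
      2 ≤ (unbalanced σ).card := by omega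
  · have hbal : ∀ i, digonSign σ i = 1 := fun i => digonSign_eq_one (by simp [card_eq_zero.mp h0])
    rcases Int.units_eq_one_or (∏ i, transferSign σ i) with hd | hd
    · exact .inl (Fi_eq_three hbal hd)
    · exact absurd h (not_flowAdmissible_of_prod_transferSign hbal hd)
  · exact absurd h (not_flowAdmissible_of_card_unbalanced_eq_one h1)
  · rw [Fi_eq_of_two_le_card h2]
    split_ifs with he
    · exact .inr (.inl ⟨rfl, h2⟩)
    · rw [Nat.even_iff] at he
      exact .inr (.inr ⟨rfl, by omega⟩)

lemma exists_card_unbalanced_eq {k : ℕ} (hk : k ≤ m + 1) :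
    ∃ σ : Edge m → ℤˣ, (unbalanced σ).card = k := by
  let σ : Edge m → ℤˣ := Sum.elim (fun p => if p.2 = 1 ∧ p.1.val < k then -1 else 1) 1
  have hσ : unbalanced σ = univ.filter fun i : Fin (m + 1) => i.val < k := by
    ext i
    by_cases hi : i.val < k <;> simp [σ, mem_unbalanced, digonSign, hi]
  exact ⟨σ, by rw [hσ, Fin.card_filter_val_lt, min_eq_right hk]⟩

lemma three_mem_intSpectrum : 3 ∈ (Gfam m).IntSpectrum := by
  have hbal : ∀ i, digonSign (m := m) 1 i = 1 := fun i => by simp [digonSign]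
  have hd : ∏ i, transferSign (m := m) 1 i = 1 := by simp [transferSign]
  exact ⟨1, (hasIntNZFlow_three hbal hd).flowAdmissible (by norm_num), Fi_eq_three hbal hd⟩

lemma mem_intSpectrum_of_two_le {k : ℕ} (hk : 2 ≤ k) (hkm : k ≤ m + 1) :
    (if Even k then 4 else 6) ∈ (Gfam m).IntSpectrum := by
  obtain ⟨σ, rfl⟩ := exists_card_unbalanced_eq hkm
  exact ⟨σ, (hasIntNZFlow_of_two_le_card hk).flowAdmissible (by split_ifs <;> norm_num),
    Fi_eq_of_two_le_card hk⟩

lemma mem_intSpectrum_iff {n : ℕ} :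
    n ∈ (Gfam m).IntSpectrum ↔ n = 3 ∨ (n = 4 ∧ 1 ≤ m) ∨ (n = 6 ∧ 2 ≤ m) := by
  constructor
  · rintro ⟨σ, h, rfl⟩
    have hcard : (unbalanced σ).card ≤ m + 1 := (card_le_univ _).trans (by simp)
    rcases Fi_of_flowAdmissible h with h3 | ⟨h4, hk⟩ | ⟨h6, hk⟩ <;> omega
  · rintro (rfl | ⟨rfl, hm⟩ | ⟨rfl, hm⟩)
    · exact three_mem_intSpectrum
    · simpa using mem_intSpectrum_of_two_le (m := m) (k := 2) le_rfl (by omega)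
    · simpa [Nat.even_iff] using
        mem_intSpectrum_of_two_le (m := m) (k := 3) (by norm_num) (by omega)

end Gfam

/-- `S̄(G_1) = {3}`, `S̄(G_2) = {3, 4}`, and `S̄(G_n) = {3, 4, 6}` for every `n ≥ 3`
(here `Gfam m` is the graph `G_{m+1}`, so `G_n = Gfam (n - 1)`). -/
theorem stmt18 :
    (Gfam 0).IntSpectrum = {3} ∧
    (Gfam 1).IntSpectrum = {3, 4} ∧
    ∀ n : ℕ, 3 ≤ n → (Gfam (n - 1)).IntSpectrum = {3, 4, 6} := by
  refine ⟨?_, ?_, fun n hn => ?_⟩ <;> ext k <;>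
    simp only [Gfam.mem_intSpectrum_iff, Set.mem_insert_iff, Set.mem_singleton_iff] <;> omega
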